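/- arXiv:1903.12333 — 2 statements merged into one kernel-verified Lean document; each statement's English description precedes it below -/
import Mathlib

section
/- Let n ≥ 2 and let (C, C̄) be an equitable 2-partition of the Hamming graph H(n,q) with quotient matrix S satisfying S₁₁ − S₂₁ = (q−1)n − 2q. Then for every coordinate i ∈ {1,…,n} and every symbol α ∈ 𝒜, one has 2·|{x ∈ C : x_i = α}| = S₂₁·q^{n−2}. -/
/-!
Double counting. The edges between `C` and `Cᶜ` give `|C| S₁₂ = (qⁿ - |C|) S₂₁`; since
`S₁₁ + S₁₂ = n(q-1)`, the eigenvalue condition turns this into `2q|C| = qⁿ S₂₁`. The edges between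
`C` and the column `{y | y i = α}`, where a vertex with `x i = α` has `(n-1)(q-1)` neighbours and
every other vertex exactly one, give `q a + |C| = qⁿ⁻¹ S₂₁` for `a = |{x ∈ C | x i = α}|`.
Hence `q a = |C|`, and `2a = qⁿ⁻² S₂₁`.
-/

/-- `(C, Cᶜ)` is an equitable 2-partition of the graph `G` (both cells nonempty) with
quotient matrix `S`: every vertex of `C` has exactly `S 0 0` neighbors in `C` and `S 0 1`
neighbors in `Cᶜ`, and every vertex of `Cᶜ` has exactly `S 1 0` neighbors in `C` and
`S 1 1` neighbors in `Cᶜ`. -/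
def IsEquitable2 {V : Type*} (G : SimpleGraph V) (C : Set V)
    (S : Matrix (Fin 2) (Fin 2) ℤ) : Prop :=
  C.Nonempty ∧ Cᶜ.Nonempty ∧
    (∀ x ∈ C, ((G.neighborSet x ∩ C).ncard : ℤ) = S 0 0 ∧
      ((G.neighborSet x ∩ Cᶜ).ncard : ℤ) = S 0 1) ∧
    (∀ x ∈ Cᶜ, ((G.neighborSet x ∩ C).ncard : ℤ) = S 1 0 ∧
      ((G.neighborSet x ∩ Cᶜ).ncard : ℤ) = S 1 1)

/-- The Hamming graph `H(n,q)` on the vertex set `𝒜ⁿ` (where `|𝒜| = q`): two vertices are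
adjacent iff they differ in exactly one coordinate. -/
def hammingGraph (n : ℕ) (𝒜 : Type*) [DecidableEq 𝒜] : SimpleGraph (Fin n → 𝒜) where
  Adj x y := hammingDist x y = 1
  symm := ⟨fun x y (h : hammingDist x y = 1) => by rwa [hammingDist_comm]⟩
  loopless := ⟨fun x (h : hammingDist x x = 1) => by simp [hammingDist_self] at h⟩

open Finset Function

namespace IsEquitable2

variable {V : Type*} [Fintype V] {G : SimpleGraph V} [DecidableRel G.Adj] {C : Set V}
  [DecidablePred (· ∈ C)] {S : Matrix (Fin 2) (Fin 2) ℤ}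

lemma card_adj_mem (hS : IsEquitable2 G C S) (x : V) :
    (#{y | G.Adj x y ∧ y ∈ C} : ℤ) = if x ∈ C then S 0 0 else S 1 0 := by
  have hcard : (G.neighborSet x ∩ C).ncard = #{y | G.Adj x y ∧ y ∈ C} := by
    rw [← Set.ncard_coe_finset]; congr; ext; simp
  rw [← hcard]
  split_ifs with hx
  · exact (hS.2.2.1 x hx).1
  · exact (hS.2.2.2 x hx).1

lemma card_adj_notMem (hS : IsEquitable2 G C S) {x : V} (hx : x ∈ C) :
    (#{y | G.Adj x y ∧ y ∉ C} : ℤ) = S 0 1 := by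
  have hcard : (G.neighborSet x ∩ Cᶜ).ncard = #{y | G.Adj x y ∧ y ∉ C} := by
    rw [← Set.ncard_coe_finset]; congr; ext; simp
  rw [← hcard]
  exact (hS.2.2.1 x hx).2

lemma add_eq_of_isRegularOfDegree (hS : IsEquitable2 G C S) {d : ℕ}
    (hd : G.IsRegularOfDegree d) : S 0 0 + S 0 1 = d := by
  obtain ⟨x, hx⟩ := hS.1
  have hsplit : #{y | G.Adj x y ∧ y ∈ C} + #{y | G.Adj x y ∧ y ∉ C} = d := by
    rw [← hd x, ← G.card_neighborFinset_eq_degree, G.neighborFinset_eq_filter,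
      ← filter_filter, ← filter_filter, card_filter_add_card_filter_not]
  have hin := hS.card_adj_mem x
  rw [if_pos hx] at hin
  rw [← hin, ← hS.card_adj_notMem hx, ← hsplit, Nat.cast_add]

lemma sum_card_adj (hS : IsEquitable2 G C S) (D : Finset V) :
    ∑ x ∈ {x | x ∈ C}, (#{y ∈ D | G.Adj x y} : ℤ) =
      #{y ∈ D | y ∈ C} * S 0 0 + #{y ∈ D | y ∉ C} * S 1 0 := by
  have hswap := sum_card_bipartiteAbove_eq_sum_card_bipartiteBelow (s := {x | x ∈ C}) (t := D)
    G.Adj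
  unfold bipartiteAbove bipartiteBelow at hswap
  rw [← Nat.cast_sum, hswap, Nat.cast_sum]
  have hterm : ∀ y ∈ D, (#{x ∈ ({x | x ∈ C} : Finset V) | G.Adj x y} : ℤ) =
      if y ∈ C then S 0 0 else S 1 0 := by
    intro y _
    rw [← hS.card_adj_mem, filter_filter]
    simp_rw [G.adj_comm, and_comm]
  rw [sum_congr rfl hterm, sum_ite, sum_const, sum_const, nsmul_eq_mul, nsmul_eq_mul]

lemma card_mul_eq_card_compl_mul (hS : IsEquitable2 G C S) :
    (#{x | x ∈ C} : ℤ) * S 0 1 = (Fintype.card V - #{x | x ∈ C}) * S 1 0 := by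
  have h := hS.sum_card_adj {y | y ∉ C}
  simp only [filter_filter, not_and_self_iff, filter_false, card_empty, Nat.cast_zero, zero_mul,
    and_self, zero_add] at h
  have htotal : (#{x | x ∈ C} : ℤ) + #{x | x ∉ C} = Fintype.card V := by
    exact_mod_cast card_filter_add_card_filter_not (s := univ) (· ∈ C)
  rw [← htotal, add_sub_cancel_left, ← h, sum_congr rfl fun x hx => ?_, sum_const, nsmul_eq_mul]
  rw [← hS.card_adj_notMem (mem_filter.1 hx).2]
  simp_rw [and_comm]

end IsEquitable2

section hammingDist

variable {ι : Type*} [Fintype ι] [DecidableEq ι] {β : ι → Type*} [∀ i, DecidableEq (β i)]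

lemma hammingDist_update_self_of_ne (x : ∀ i, β i) {i : ι} {a : β i} (ha : a ≠ x i) :
    hammingDist x (update x i a) = 1 := by
  rw [hammingDist, card_eq_one]
  refine ⟨i, ?_⟩
  ext j
  by_cases h : j = i
  · subst h; simp [ha.symm]
  · simp [h]

lemma eq_update_of_hammingDist_eq_one {x y : ∀ i, β i} (h : hammingDist x y = 1) {i : ι}
    (hi : x i ≠ y i) : y = update x i (y i) := by
  ext j
  by_cases hj : j = i
  · subst hj; simp
  · rw [update_of_ne hj]
    by_contra hne
    have hle : #{k | x k ≠ y k} ≤ 1 := h.le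
    exact hj (card_le_one.1 hle j (by simpa [eq_comm] using hne) i (by simpa using hi))

end hammingDist

section hammingGraph

variable {n : ℕ} {𝒜 : Type*} [DecidableEq 𝒜]

instance : DecidableRel (hammingGraph n 𝒜).Adj :=
  fun x y => inferInstanceAs (Decidable (hammingDist x y = 1))

lemma hammingGraph_adj {x y : Fin n → 𝒜} :
    (hammingGraph n 𝒜).Adj x y ↔ hammingDist x y = 1 := Iff.rfl

lemma hammingGraph_adj_and_ne_iff {x y : Fin n → 𝒜} {i : Fin n} :
    (hammingGraph n 𝒜).Adj x y ∧ x i ≠ y i ↔ ∃ a ≠ x i, update x i a = y := by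
  constructor
  · rintro ⟨h, hi⟩
    exact ⟨y i, hi.symm, (eq_update_of_hammingDist_eq_one h hi).symm⟩
  · rintro ⟨a, ha, rfl⟩
    exact ⟨hammingDist_update_self_of_ne x ha, by simpa using ha.symm⟩

variable [Fintype 𝒜]

lemma filter_hammingGraph_adj_and_ne (x : Fin n → 𝒜) (i : Fin n) :
    ({y | (hammingGraph n 𝒜).Adj x y ∧ x i ≠ y i} : Finset _) =
      (univ.erase (x i)).image (update x i) := by
  ext y
  simp [hammingGraph_adj_and_ne_iff]

lemma card_filter_hammingGraph_adj_and_ne (x : Fin n → 𝒜) (i : Fin n) :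
    #{y | (hammingGraph n 𝒜).Adj x y ∧ x i ≠ y i} = Fintype.card 𝒜 - 1 := by
  rw [filter_hammingGraph_adj_and_ne, card_image_of_injective _ (update_injective x i),
    card_erase_of_mem (mem_univ _), card_univ]

lemma hammingGraph_neighborFinset (x : Fin n → 𝒜) :
    (hammingGraph n 𝒜).neighborFinset x =
      univ.biUnion fun i => {y | (hammingGraph n 𝒜).Adj x y ∧ x i ≠ y i} := by
  ext y
  simp only [SimpleGraph.mem_neighborFinset, mem_biUnion, mem_univ, mem_filter, true_and]
  constructor
  · intro h
    obtain ⟨i, hi⟩ : ∃ i, x i ≠ y i := by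
      by_contra! hxy
      rw [hammingGraph_adj, funext hxy, hammingDist_self] at h
      exact zero_ne_one h
    exact ⟨i, h, hi⟩
  · rintro ⟨i, h, -⟩
    exact h

lemma hammingGraph_isRegularOfDegree :
    (hammingGraph n 𝒜).IsRegularOfDegree (n * (Fintype.card 𝒜 - 1)) := by
  intro x
  rw [← SimpleGraph.card_neighborFinset_eq_degree, hammingGraph_neighborFinset, card_biUnion]
  · simp [card_filter_hammingGraph_adj_and_ne]
  · intro i _ j _ hij
    simp only [filter_hammingGraph_adj_and_ne, disjoint_left, mem_image]
    rintro _ ⟨a, ha, rfl⟩ ⟨b, hb, hab⟩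
    have hai := congrFun hab i
    rw [update_self, update_of_ne hij] at hai
    exact (ne_of_mem_erase ha) hai.symm

lemma card_filter_hammingGraph_adj_apply_eq (x : Fin n → 𝒜) (i : Fin n) (α : 𝒜) :
    #{y | (hammingGraph n 𝒜).Adj x y ∧ y i = α} =
      if x i = α then (n - 1) * (Fintype.card 𝒜 - 1) else 1 := by
  split_ifs with hx
  · subst hx
    have hsplit := card_filter_add_card_filter_not (s := (hammingGraph n 𝒜).neighborFinset x)
      (fun y => y i = x i)
    rw [Nat.sub_one_mul, ← hammingGraph_isRegularOfDegree x,
      ← SimpleGraph.card_neighborFinset_eq_degree, ← hsplit, SimpleGraph.neighborFinset_eq_filter,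
      filter_filter, filter_filter, ← card_filter_hammingGraph_adj_and_ne x i]
    simp_rw [ne_comm (a := x i)]
    exact (Nat.add_sub_cancel _ _).symm
  · rw [card_eq_one]
    refine ⟨update x i α, ?_⟩
    ext y
    simp only [mem_filter, mem_univ, true_and, mem_singleton]
    constructor
    · rintro ⟨h, rfl⟩
      exact eq_update_of_hammingDist_eq_one h hx
    · rintro rfl
      exact ⟨hammingDist_update_self_of_ne x (Ne.symm hx), update_self ..⟩

lemma card_filter_apply_eq (i : Fin n) (α : 𝒜) :
    #{y : Fin n → 𝒜 | y i = α} = Fintype.card 𝒜 ^ (n - 1) := by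
  simpa using Fintype.card_filter_piFinset_const (univ : Finset 𝒜) i α

end hammingGraph

lemma IsEquitable2.hammingGraph_column_count {n : ℕ} {𝒜 : Type*} [Fintype 𝒜] [DecidableEq 𝒜]
    {C : Set (Fin n → 𝒜)} [DecidablePred (· ∈ C)] {S : Matrix (Fin 2) (Fin 2) ℤ}
    (hS : IsEquitable2 (hammingGraph n 𝒜) C S) (i : Fin n) (α : 𝒜) :
    (#{x | x ∈ C ∧ x i = α} : ℤ) * ((n - 1) * (Fintype.card 𝒜 - 1) : ℕ) +
        (#{x | x ∈ C} - #{x | x ∈ C ∧ x i = α}) =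
      #{x | x ∈ C ∧ x i = α} * S 0 0 +
        (Fintype.card 𝒜 ^ (n - 1) - #{x | x ∈ C ∧ x i = α}) * S 1 0 := by
  set col : Finset (Fin n → 𝒜) := {y | y i = α}
  have hcol : (#{y ∈ col | y ∈ C} : ℤ) + #{y ∈ col | y ∉ C} = Fintype.card 𝒜 ^ (n - 1) := by
    exact_mod_cast (card_filter_add_card_filter_not _).trans (card_filter_apply_eq i α)
  have hC : (#{x | x ∈ C ∧ x i = α} : ℤ) + #{x | x ∈ C ∧ ¬x i = α} = #{x | x ∈ C} := by
    rw [← filter_filter, ← filter_filter]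
    exact_mod_cast card_filter_add_card_filter_not _
  have hswap : ({y ∈ col | y ∈ C} : Finset _) = ({x | x ∈ C ∧ x i = α} : Finset _) := by
    rw [filter_filter]; simp_rw [and_comm]
  have hterm : ∀ x, #{y ∈ col | (hammingGraph n 𝒜).Adj x y} =
      if x i = α then (n - 1) * (Fintype.card 𝒜 - 1) else 1 := fun x => by
    rw [filter_filter, ← card_filter_hammingGraph_adj_apply_eq]
    simp_rw [and_comm]
  rw [← hC, ← hcol, hswap, add_sub_cancel_left, add_sub_cancel_left, ← hswap,
    ← hS.sum_card_adj col]
  simp_rw [hterm, Nat.cast_ite]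
  simp only [sum_ite, sum_const, nsmul_eq_mul, Nat.cast_one, mul_one, hswap, filter_filter,
    and_comm]

theorem stmt1_general {𝒜 : Type*} [Fintype 𝒜] [DecidableEq 𝒜] (q n : ℕ)
    (hq : Fintype.card 𝒜 = q) (hn : 2 ≤ n)
    (C : Set (Fin n → 𝒜)) (S : Matrix (Fin 2) (Fin 2) ℤ)
    (hS : IsEquitable2 (hammingGraph n 𝒜) C S)
    (heig : S 0 0 - S 1 0 = ((q : ℤ) - 1) * n - 2 * q) :
    ∀ (i : Fin n) (α : 𝒜),
      2 * (({x ∈ C | x i = α}).ncard : ℤ) = S 1 0 * (q : ℤ) ^ (n - 2) := by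
  classical
  subst hq
  intro i α
  obtain ⟨x, hx⟩ := hS.1
  have hq_pos : 0 < Fintype.card 𝒜 := Fintype.card_pos_iff.2 ⟨x i⟩
  have hq0 : (Fintype.card 𝒜 : ℤ) ≠ 0 := by exact_mod_cast hq_pos.ne'
  have hncard : ({x ∈ C | x i = α}).ncard = #{x | x ∈ C ∧ x i = α} := by
    rw [← Set.ncard_coe_finset]; congr; ext; simp
  have hdeg := hS.add_eq_of_isRegularOfDegree hammingGraph_isRegularOfDegree
  have hcut := hS.card_mul_eq_card_compl_mul
  have hcol := hS.hammingGraph_column_count i α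
  simp only [Fintype.card_fun, Fintype.card_fin] at hcut
  push_cast [Nat.cast_sub hq_pos, Nat.cast_sub (by omega : 1 ≤ n)] at hdeg hcut hcol
  rw [hncard]
  set q : ℤ := (Fintype.card 𝒜 : ℤ)
  set c : ℤ := ((#{x | x ∈ C} : ℕ) : ℤ)
  set a : ℤ := ((#{x | x ∈ C ∧ x i = α} : ℕ) : ℤ)
  have hc : 2 * q * c = q ^ n * S 1 0 := by linear_combination hcut - c * hdeg + c * heig
  have ha : q * a + c = q ^ (n - 1) * S 1 0 := by linear_combination hcol + a * heig
  obtain ⟨k, rfl⟩ : ∃ k, n = k + 2 := ⟨n - 2, by omega⟩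
  simp only [Nat.add_sub_cancel, Nat.add_succ_sub_one] at ha ⊢
  apply mul_left_cancel₀ (pow_ne_zero 2 hq0)
  linear_combination 2 * q * ha - hc

/-- If `(C, Cᶜ)` is an equitable 2-partition of `H(n,q)`, `n ≥ 2`, with
quotient matrix `S` satisfying `S₁₁ - S₂₁ = (q-1)n - 2q`, then for every coordinate `i`
and symbol `α` one has `2 |{x ∈ C : x i = α}| = S₂₁ q^(n-2)`. -/
theorem stmt1 {𝒜 : Type*} [Fintype 𝒜] [DecidableEq 𝒜] (q n : ℕ)
    (hq : Fintype.card 𝒜 = q) (hq2 : 2 ≤ q) (hn : 2 ≤ n)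
    (C : Set (Fin n → 𝒜)) (S : Matrix (Fin 2) (Fin 2) ℤ)
    (hS : IsEquitable2 (hammingGraph n 𝒜) C S)
    (heig : S 0 0 - S 1 0 = ((q : ℤ) - 1) * n - 2 * q) :
    ∀ (i : Fin n) (α : 𝒜),
      2 * (({x ∈ C | x i = α}).ncard : ℤ) = S 1 0 * (q : ℤ) ^ (n - 2) :=
  stmt1_general q n hq hn C S hS heig
end

section
/- Let q, q' ≥ 2 and let G be the graph on Fin q × Fin q' in which two vertices are adjacent iff they differ in exactly one coordinate (the Cartesian product K_q □ K_{q'}). Let C be a subset of the vertices with both C and its complement nonempty. Then (C, C̄) is an equitable 2-partition of G whose quotient matrix S satisfies S₁₁ − S₂₁ = −2 if and only if there is a rational number c such that |C ∩ ({a} × Fin q')| = c·q' for every a ∈ Fin q and |C ∩ (Fin q × {b})| = c·q for every b ∈ Fin q'; moreover, in that case c = S₂₁/(q + q'). -/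
/-- The Cartesian product `K_q □ K_{q'}` : the graph on pairs in which two vertices are
adjacent iff they differ in exactly one coordinate. -/
def rookGraph (α β : Type*) : SimpleGraph (α × β) where
  Adj x y := (x.1 = y.1 ∧ x.2 ≠ y.2) ∨ (x.1 ≠ y.1 ∧ x.2 = y.2)
  symm := by
    constructor
    rintro ⟨a, b⟩ ⟨c, d⟩ (⟨h1, h2⟩ | ⟨h1, h2⟩)
    · exact Or.inl ⟨h1.symm, h2.symm⟩
    · exact Or.inr ⟨h1.symm, h2.symm⟩
  loopless := ⟨by rintro ⟨a, b⟩ (⟨h1, h2⟩ | ⟨h1, h2⟩) <;> simp_all⟩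

/-! Counting the neighbours of `x` in its row and in its column gives
`|N(x) ∩ D| + 2·[x ∈ D] = r_D(x.1) + c_D(x.2)`, where `r_D`, `c_D` are the row and column
counts of `D`. So `S₁₁ - S₂₁ = -2` says exactly that `r_C(a) + c_C(b) = S₂₁` for all `a, b`;
then `r_C` and `c_C` are constant, and double counting `|C| = q·r_C = q'·c_C` forces
`r_C = S₂₁ q'/(q + q')` and `c_C = S₂₁ q/(q + q')`. -/

lemma eq_div_mul_card_of_add_eq {ι κ K : Type*} [Fintype ι] [Fintype κ] [Nonempty ι]
    [Nonempty κ] [Field K] [CharZero K] {f : ι → K} {g : κ → K} {k : K}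
    (hsum : ∑ i, f i = ∑ j, g j) (hk : ∀ i j, f i + g j = k) :
    (∀ i, f i = k / (Fintype.card ι + Fintype.card κ) * Fintype.card κ) ∧
      ∀ j, g j = k / (Fintype.card ι + Fintype.card κ) * Fintype.card ι := by
  obtain ⟨i₀⟩ := ‹Nonempty ι›
  obtain ⟨j₀⟩ := ‹Nonempty κ›
  have hf (i : ι) : f i = f i₀ := by linear_combination hk i j₀ - hk i₀ j₀
  have hg (j : κ) : g j = g j₀ := by linear_combination hk i₀ j - hk i₀ j₀
  have hcard : (Fintype.card ι : K) * f i₀ = Fintype.card κ * g j₀ := by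
    simpa [Finset.sum_congr rfl fun i _ => hf i, Finset.sum_congr rfl fun j _ => hg j]
      using hsum
  have hpos : (Fintype.card ι + Fintype.card κ : K) ≠ 0 := by
    exact_mod_cast (Nat.add_pos_left Fintype.card_pos _).ne'
  refine ⟨fun i => ?_, fun j => ?_⟩
  · rw [hf i, div_mul_eq_mul_div, eq_div_iff hpos]
    linear_combination hcard + Fintype.card κ * hk i₀ j₀
  · rw [hg j, div_mul_eq_mul_div, eq_div_iff hpos]
    linear_combination Fintype.card ι * hk i₀ j₀ - hcard

lemma Set.ncard_eq_sum_ncard_inter_preimage {γ α : Type*} [Finite γ] [Fintype α]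
    (D : Set γ) (f : γ → α) : D.ncard = ∑ a, (D ∩ f ⁻¹' {a}).ncard := by
  rw [← finsum_eq_sum_of_fintype, ← Set.ncard_iUnion_of_finite (fun _ => Set.toFinite _)
    fun a b hab => (pairwise_disjoint_fiber f hab).mono Set.inter_subset_right
      Set.inter_subset_right,
    ← Set.inter_iUnion, Set.iUnion_eq_univ_iff.2 fun x => ⟨f x, rfl⟩, Set.inter_univ]

namespace rookGraph

variable {α β : Type*}

lemma neighborSet_inter (D : Set (α × β)) (x : α × β) :
    (rookGraph α β).neighborSet x ∩ D =
      (D ∩ {p | p.1 = x.1}) \ {x} ∪ (D ∩ {p | p.2 = x.2}) \ {x} := by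
  ext ⟨a, b⟩
  simp only [SimpleGraph.mem_neighborSet, rookGraph, Set.mem_inter_iff, Set.mem_union,
    Set.mem_sdiff, Set.mem_singleton_iff, Set.mem_ofPred_eq, Prod.ext_iff]
  grind

lemma disjoint_inter_fst_sdiff_inter_snd (D : Set (α × β)) (x : α × β) :
    Disjoint ((D ∩ {p | p.1 = x.1}) \ {x}) ((D ∩ {p | p.2 = x.2}) \ {x}) := by
  rw [Set.disjoint_left]
  rintro ⟨a, b⟩ ⟨⟨-, ha⟩, hx⟩ ⟨⟨-, hb⟩, -⟩
  exact hx (Prod.ext ha hb)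

lemma ncard_setOf_fst_eq (a : α) : {p : α × β | p.1 = a}.ncard = Nat.card β := by
  have : {p : α × β | p.1 = a} = {a} ×ˢ Set.univ := by ext; simp
  rw [this, Set.ncard_prod, Set.ncard_singleton, Set.ncard_univ, one_mul]

lemma ncard_setOf_snd_eq (b : β) : {p : α × β | p.2 = b}.ncard = Nat.card α := by
  have : {p : α × β | p.2 = b} = Set.univ ×ˢ {b} := by ext; simp
  rw [this, Set.ncard_prod, Set.ncard_singleton, Set.ncard_univ, mul_one]

variable [Finite α] [Finite β]

lemma ncard_neighborSet_inter (D : Set (α × β)) (x : α × β) :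
    ((rookGraph α β).neighborSet x ∩ D).ncard =
      ((D ∩ {p | p.1 = x.1}) \ {x}).ncard + ((D ∩ {p | p.2 = x.2}) \ {x}).ncard := by
  rw [neighborSet_inter, Set.ncard_union_eq (disjoint_inter_fst_sdiff_inter_snd D x)]

lemma ncard_neighborSet_inter_add_two {D : Set (α × β)} {x : α × β} (hx : x ∈ D) :
    ((rookGraph α β).neighborSet x ∩ D).ncard + 2 =
      (D ∩ {p | p.1 = x.1}).ncard + (D ∩ {p | p.2 = x.2}).ncard := by
  have hrow : x ∈ D ∩ {p | p.1 = x.1} := ⟨hx, rfl⟩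
  have hcol : x ∈ D ∩ {p | p.2 = x.2} := ⟨hx, rfl⟩
  rw [ncard_neighborSet_inter, ← Set.ncard_sdiff_singleton_add_one hrow,
    ← Set.ncard_sdiff_singleton_add_one hcol]
  ring

lemma ncard_neighborSet_inter_of_notMem {D : Set (α × β)} {x : α × β} (hx : x ∉ D) :
    ((rookGraph α β).neighborSet x ∩ D).ncard =
      (D ∩ {p | p.1 = x.1}).ncard + (D ∩ {p | p.2 = x.2}).ncard := by
  rw [ncard_neighborSet_inter, Set.sdiff_singleton_eq_self (fun h => hx h.1),
    Set.sdiff_singleton_eq_self (fun h => hx h.1)]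

lemma ncard_neighborSet_add_two (x : α × β) :
    ((rookGraph α β).neighborSet x).ncard + 2 = Nat.card α + Nat.card β := by
  simpa [ncard_setOf_fst_eq, ncard_setOf_snd_eq, add_comm] using
    ncard_neighborSet_inter_add_two (Set.mem_univ x)

lemma ncard_inter_fst_add_ncard_inter_snd_of_isEquitable2 {C : Set (α × β)}
    {S : Matrix (Fin 2) (Fin 2) ℤ} (hS : IsEquitable2 (rookGraph α β) C S)
    (hS₁ : S 0 0 - S 1 0 = -2) (x : α × β) :
    ((C ∩ {p | p.1 = x.1}).ncard + (C ∩ {p | p.2 = x.2}).ncard : ℤ) = S 1 0 := by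
  by_cases hx : x ∈ C
  · have := ncard_neighborSet_inter_add_two hx
    have := (hS.2.2.1 x hx).1
    omega
  · have := ncard_neighborSet_inter_of_notMem hx
    have := (hS.2.2.2 x hx).1
    omega

lemma isEquitable2_of_ncard_inter_fst_add_ncard_inter_snd {C : Set (α × β)}
    (hC : C.Nonempty) (hCc : Cᶜ.Nonempty) {k : ℕ}
    (hk : ∀ x : α × β, (C ∩ {p | p.1 = x.1}).ncard + (C ∩ {p | p.2 = x.2}).ncard = k) :
    IsEquitable2 (rookGraph α β) C
      !![(k : ℤ) - 2, Nat.card α + Nat.card β - k; k, Nat.card α + Nat.card β - k - 2] := by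
  have hdeg (x : α × β) : ((rookGraph α β).neighborSet x ∩ C).ncard +
      ((rookGraph α β).neighborSet x ∩ Cᶜ).ncard + 2 = Nat.card α + Nat.card β := by
    rw [← ncard_neighborSet_add_two x, ←
      Set.ncard_inter_add_ncard_sdiff_eq_ncard ((rookGraph α β).neighborSet x) C]
    rfl
  refine ⟨hC, hCc, fun x hx => ?_, fun x hx => ?_⟩
  · have := ncard_neighborSet_inter_add_two hx
    have := hdeg x
    have := hk x
    simp only [Matrix.of_apply, Matrix.cons_val', Matrix.cons_val_zero, Matrix.cons_val_one]
    constructor <;> omega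
  · have := ncard_neighborSet_inter_of_notMem hx
    have := hdeg x
    have := hk x
    simp only [Matrix.of_apply, Matrix.cons_val', Matrix.cons_val_zero, Matrix.cons_val_one]
    constructor <;> omega

lemma ncard_inter_eq_of_isEquitable2 [Fintype α] [Fintype β] [Nonempty α] [Nonempty β]
    {C : Set (α × β)} {S : Matrix (Fin 2) (Fin 2) ℤ} (hS : IsEquitable2 (rookGraph α β) C S)
    (hS₁ : S 0 0 - S 1 0 = -2) :
    (∀ a : α, ((C ∩ {p | p.1 = a}).ncard : ℚ) =
        S 1 0 / (Fintype.card α + Fintype.card β) * Fintype.card β) ∧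
      ∀ b : β, ((C ∩ {p | p.2 = b}).ncard : ℚ) =
        S 1 0 / (Fintype.card α + Fintype.card β) * Fintype.card α := by
  have hsum : ∑ a, (C ∩ {p | p.1 = a}).ncard = ∑ b, (C ∩ {p | p.2 = b}).ncard :=
    (C.ncard_eq_sum_ncard_inter_preimage Prod.fst).symm.trans
      (C.ncard_eq_sum_ncard_inter_preimage Prod.snd)
  exact eq_div_mul_card_of_add_eq (by exact_mod_cast hsum) fun a b => by
    exact_mod_cast ncard_inter_fst_add_ncard_inter_snd_of_isEquitable2 hS hS₁ (a, b)

end rookGraph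

theorem stmt5_general (q q' : ℕ)
    (C : Set (Fin q × Fin q')) (hC : C.Nonempty) (hCc : Cᶜ.Nonempty) :
    ((∃ S : Matrix (Fin 2) (Fin 2) ℤ,
        IsEquitable2 (rookGraph (Fin q) (Fin q')) C S ∧ S 0 0 - S 1 0 = -2) ↔
      (∃ c : ℚ,
        (∀ a : Fin q, ((C ∩ {p | p.1 = a}).ncard : ℚ) = c * q') ∧
        (∀ b : Fin q', ((C ∩ {p | p.2 = b}).ncard : ℚ) = c * q))) ∧
    (∀ (S : Matrix (Fin 2) (Fin 2) ℤ) (c : ℚ),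
      IsEquitable2 (rookGraph (Fin q) (Fin q')) C S → S 0 0 - S 1 0 = -2 →
      (∀ a : Fin q, ((C ∩ {p | p.1 = a}).ncard : ℚ) = c * q') →
      (∀ b : Fin q', ((C ∩ {p | p.2 = b}).ncard : ℚ) = c * q) →
      c = (S 1 0 : ℚ) / ((q : ℚ) + q')) := by
  obtain ⟨a₀, b₀⟩ := hC.some
  have : Nonempty (Fin q) := ⟨a₀⟩
  have : Nonempty (Fin q') := ⟨b₀⟩
  refine ⟨⟨fun ⟨S, hS, hS₁⟩ => ?_, fun ⟨c, hrow, hcol⟩ => ?_⟩,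
    fun S c hS hS₁ hrow hcol => ?_⟩
  · obtain ⟨hrow, hcol⟩ := rookGraph.ncard_inter_eq_of_isEquitable2 hS hS₁
    exact ⟨_, by simpa using hrow, by simpa using hcol⟩
  · have hk (x : Fin q × Fin q') : (C ∩ {p | p.1 = x.1}).ncard + (C ∩ {p | p.2 = x.2}).ncard =
        (C ∩ {p | p.1 = a₀}).ncard + (C ∩ {p | p.2 = b₀}).ncard := by
      exact_mod_cast (by rw [hrow, hcol, hrow, hcol] :
        ((C ∩ {p | p.1 = x.1}).ncard + (C ∩ {p | p.2 = x.2}).ncard : ℚ) =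
          (C ∩ {p | p.1 = a₀}).ncard + (C ∩ {p | p.2 = b₀}).ncard)
    exact ⟨_, rookGraph.isEquitable2_of_ncard_inter_fst_add_ncard_inter_snd hC hCc hk, by simp⟩
  · obtain ⟨hrow', -⟩ := rookGraph.ncard_inter_eq_of_isEquitable2 hS hS₁
    have hq' : (q' : ℚ) ≠ 0 := Nat.cast_ne_zero.2 (Fin.pos b₀).ne'
    exact mul_right_cancel₀ hq' (by simpa using (hrow a₀).symm.trans (hrow' a₀))

/-- For the graph `K_q □ K_{q'}` and a set `C` with `C` and `Cᶜ` nonempty: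
`(C, Cᶜ)` is equitable with some quotient matrix `S` satisfying `S₁₁ - S₂₁ = -2` iff
there is a rational `c` with `|C ∩ row a| = c·q'` for every row and `|C ∩ col b| = c·q`
for every column; moreover in that case `c = S₂₁/(q + q')`. -/
theorem stmt5 (q q' : ℕ) (hq : 2 ≤ q) (hq' : 2 ≤ q')
    (C : Set (Fin q × Fin q')) (hC : C.Nonempty) (hCc : Cᶜ.Nonempty) :
    ((∃ S : Matrix (Fin 2) (Fin 2) ℤ,
        IsEquitable2 (rookGraph (Fin q) (Fin q')) C S ∧ S 0 0 - S 1 0 = -2) ↔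
      (∃ c : ℚ,
        (∀ a : Fin q, ((C ∩ {p | p.1 = a}).ncard : ℚ) = c * q') ∧
        (∀ b : Fin q', ((C ∩ {p | p.2 = b}).ncard : ℚ) = c * q))) ∧
    (∀ (S : Matrix (Fin 2) (Fin 2) ℤ) (c : ℚ),
      IsEquitable2 (rookGraph (Fin q) (Fin q')) C S → S 0 0 - S 1 0 = -2 →
      (∀ a : Fin q, ((C ∩ {p | p.1 = a}).ncard : ℚ) = c * q') →
      (∀ b : Fin q', ((C ∩ {p | p.2 = b}).ncard : ℚ) = c * q) →
      c = (S 1 0 : ℚ) / ((q : ℚ) + q')) :=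
  stmt5_general q q' C hC hCc
end
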